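/- Let Σ_1(θ) be the 10×10 covariance structure of the SEM Model 1 with θ ∈ ℝ^{22}, where the blocks are: Σ^{11}(θ) = λ λ^T θ^{(10)} + Diag(θ^{(11)},…,θ^{(14)}) with λ = (1, θ^{(1)}, θ^{(2)}, θ^{(3)})^T; Σ^{12}(θ) = λ θ^{(10)} γ^T Λ_2^T with γ = (θ^{(8)}, θ^{(9)})^T and Λ_2 the 6×2 matrix with columns (1, θ^{(4)}, θ^{(5)}, 0,0,0)^T and (0,0,0, 1, θ^{(6)}, θ^{(7)})^T; Σ^{22}(θ) = Λ_2 (γ γ^T θ^{(10)} + Diag(θ^{(21)}, θ^{(22)})) Λ_2^T + Diag(θ^{(15)},…,θ^{(20)}). Suppose θ_0 has θ_0^{(i)} ≠ 0 for i ∈ {1,2,4,6,8,9,10}. If Σ_1(θ) = Σ_1(θ_0) and θ also has these coordinates nonzero, then θ = θ_0. -/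
import Mathlib


open Matrix

noncomputable section

/-- Loading vector Λ_{x_1} = (1, θ^{(1)}, θ^{(2)}, θ^{(3)})ᵀ as a 4×1 matrix. -/
def lam1 (θ : Fin 22 → ℝ) : Matrix (Fin 4) (Fin 1) ℝ :=
  !![1; θ 0; θ 1; θ 2]

/-- Loading matrix Λ_{x_2} (6×2). -/
def lam2 (θ : Fin 22 → ℝ) : Matrix (Fin 6) (Fin 2) ℝ :=
  !![1, 0; θ 3, 0; θ 4, 0; 0, 1; 0, θ 5; 0, θ 6]

/-- Structural coefficient vector Γ = (θ^{(8)}, θ^{(9)})ᵀ as a 2×1 matrix. -/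
def gam (θ : Fin 22 → ℝ) : Matrix (Fin 2) (Fin 1) ℝ :=
  !![θ 7; θ 8]

/-- Block Σ^{11}(θ) = λ λᵀ θ^{(10)} + Diag(θ^{(11)},…,θ^{(14)}). -/
def Sig11 (θ : Fin 22 → ℝ) : Matrix (Fin 4) (Fin 4) ℝ :=
  θ 9 • (lam1 θ * (lam1 θ)ᵀ) +
    Matrix.diagonal (fun i : Fin 4 => θ ⟨10 + i.1, by have := i.isLt; omega⟩)

/-- Block Σ^{12}(θ) = λ θ^{(10)} γᵀ Λ_2ᵀ. -/
def Sig12 (θ : Fin 22 → ℝ) : Matrix (Fin 4) (Fin 6) ℝ :=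
  θ 9 • (lam1 θ * (gam θ)ᵀ * (lam2 θ)ᵀ)

/-- Block Σ^{22}(θ) = Λ_2 (γ γᵀ θ^{(10)} + Diag(θ^{(21)}, θ^{(22)})) Λ_2ᵀ
    + Diag(θ^{(15)},…,θ^{(20)}). -/
def Sig22 (θ : Fin 22 → ℝ) : Matrix (Fin 6) (Fin 6) ℝ :=
  lam2 θ * (θ 9 • (gam θ * (gam θ)ᵀ) +
      Matrix.diagonal (fun i : Fin 2 => θ ⟨20 + i.1, by have := i.isLt; omega⟩)) * (lam2 θ)ᵀ +
    Matrix.diagonal (fun i : Fin 6 => θ ⟨14 + i.1, by have := i.isLt; omega⟩)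

/-- The 10×10 covariance structure Σ_1(θ) of SEM Model 1. -/
def Sig1 (θ : Fin 22 → ℝ) : Matrix (Fin 4 ⊕ Fin 6) (Fin 4 ⊕ Fin 6) ℝ :=
  Matrix.fromBlocks (Sig11 θ) (Sig12 θ) (Sig12 θ)ᵀ (Sig22 θ)

lemma cons_val_five' {α : Type*} {m : ℕ} (x : α) (u : Fin (m+5) → α) :
    Matrix.vecCons x u 5 = Matrix.vecHead (Matrix.vecTail (Matrix.vecTail (Matrix.vecTail (Matrix.vecTail u)))) :=
  rfl

set_option maxHeartbeats 4000000 in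
theorem stmt_14 (θ θ₀ : Fin 22 → ℝ)
    (hθ : ∀ i : Fin 22, i.1 ∈ ({0, 1, 3, 5, 7, 8, 9} : Set ℕ) → θ i ≠ 0)
    (hθ₀ : ∀ i : Fin 22, i.1 ∈ ({0, 1, 3, 5, 7, 8, 9} : Set ℕ) → θ₀ i ≠ 0)
    (h : Sig1 θ = Sig1 θ₀) : θ = θ₀ := by
  have m0 : θ₀ 0 ≠ 0 := hθ₀ 0 (by decide)
  have m1 : θ₀ 1 ≠ 0 := hθ₀ 1 (by decide)
  have m3 : θ₀ 3 ≠ 0 := hθ₀ 3 (by decide)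
  have m5 : θ₀ 5 ≠ 0 := hθ₀ 5 (by decide)
  have m7 : θ₀ 7 ≠ 0 := hθ₀ 7 (by decide)
  have m8 : θ₀ 8 ≠ 0 := hθ₀ 8 (by decide)
  have m9 : θ₀ 9 ≠ 0 := hθ₀ 9 (by decide)
  have e00 := congrFun (congrFun h (Sum.inl 0)) (Sum.inl 0)
  have e01 := congrFun (congrFun h (Sum.inl 0)) (Sum.inl 1)
  have e02 := congrFun (congrFun h (Sum.inl 0)) (Sum.inl 2)
  have e03 := congrFun (congrFun h (Sum.inl 0)) (Sum.inl 3)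
  have e12 := congrFun (congrFun h (Sum.inl 1)) (Sum.inl 2)
  have e11 := congrFun (congrFun h (Sum.inl 1)) (Sum.inl 1)
  have e22 := congrFun (congrFun h (Sum.inl 2)) (Sum.inl 2)
  have e33 := congrFun (congrFun h (Sum.inl 3)) (Sum.inl 3)
  have f0 := congrFun (congrFun h (Sum.inl 0)) (Sum.inr 0)
  have f1 := congrFun (congrFun h (Sum.inl 0)) (Sum.inr 1)
  have f2 := congrFun (congrFun h (Sum.inl 0)) (Sum.inr 2)
  have f3 := congrFun (congrFun h (Sum.inl 0)) (Sum.inr 3)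
  have f4 := congrFun (congrFun h (Sum.inl 0)) (Sum.inr 4)
  have f5 := congrFun (congrFun h (Sum.inl 0)) (Sum.inr 5)
  have g01 := congrFun (congrFun h (Sum.inr 0)) (Sum.inr 1)
  have g34 := congrFun (congrFun h (Sum.inr 3)) (Sum.inr 4)
  have g00 := congrFun (congrFun h (Sum.inr 0)) (Sum.inr 0)
  have g11 := congrFun (congrFun h (Sum.inr 1)) (Sum.inr 1)
  have g22 := congrFun (congrFun h (Sum.inr 2)) (Sum.inr 2)
  have g33 := congrFun (congrFun h (Sum.inr 3)) (Sum.inr 3)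
  have g44 := congrFun (congrFun h (Sum.inr 4)) (Sum.inr 4)
  have g55 := congrFun (congrFun h (Sum.inr 5)) (Sum.inr 5)
  simp [Sig1, Sig11, Sig12, Sig22, lam1, lam2, gam, Matrix.mul_apply, Fin.sum_univ_succ,
    Matrix.diagonal, Matrix.transpose_apply, Matrix.vecHead, Matrix.vecTail, Matrix.vecMul,
    dotProduct, cons_val_five', Fin.succ] at e00 e01 e02 e03 e12 e11 e22 e33 f0 f1 f2 f3 f4 f5 g01 g34 g00 g11 g22 g33 g44 g55
  norm_num at e03 g34 g55
  have h9 : θ 9 = θ₀ 9 := by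
    apply mul_right_cancel₀ (mul_ne_zero m9 (mul_ne_zero m0 m1))
    linear_combination θ 9 * θ 1 * e01 + θ₀ 9 * θ₀ 0 * e02 - θ 9 * e12
  have h0 : θ 0 = θ₀ 0 := by
    apply mul_left_cancel₀ m9
    linear_combination e01 - θ 0 * h9
  have h1 : θ 1 = θ₀ 1 := by
    apply mul_left_cancel₀ m9
    linear_combination e02 - θ 1 * h9
  have h2 : θ 2 = θ₀ 2 := by
    apply mul_left_cancel₀ m9
    linear_combination e03 - θ 2 * h9
  have h7 : θ 7 = θ₀ 7 := by
    apply mul_left_cancel₀ m9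
    linear_combination f0 - θ 7 * h9
  have h8 : θ 8 = θ₀ 8 := by
    apply mul_left_cancel₀ m9
    linear_combination f3 - θ 8 * h9
  have k97 : θ 9 * θ 7 = θ₀ 9 * θ₀ 7 := by rw [h9, h7]
  have k98 : θ 9 * θ 8 = θ₀ 9 * θ₀ 8 := by rw [h9, h8]
  have h3 : θ 3 = θ₀ 3 := by
    apply mul_left_cancel₀ (mul_ne_zero m9 m7)
    linear_combination f1 - θ 3 * k97
  have h4 : θ 4 = θ₀ 4 := by
    apply mul_left_cancel₀ (mul_ne_zero m9 m7)
    linear_combination f2 - θ 4 * k97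
  have h5 : θ 5 = θ₀ 5 := by
    apply mul_left_cancel₀ (mul_ne_zero m9 m8)
    linear_combination f4 - θ 5 * k98
  have h6 : θ 6 = θ₀ 6 := by
    apply mul_left_cancel₀ (mul_ne_zero m9 m8)
    linear_combination f5 - θ 6 * k98
  have h20 : θ 20 = θ₀ 20 := by
    apply mul_right_cancel₀ m3
    rw [h3] at g01
    linear_combination g01 - θ₀ 3 * θ 7 * k97 - θ₀ 3 * θ₀ 9 * θ₀ 7 * h7
  have h21 : θ 21 = θ₀ 21 := by
    apply mul_right_cancel₀ m5
    rw [h5] at g34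
    linear_combination g34 - θ₀ 5 * θ 8 * k98 - θ₀ 5 * θ₀ 9 * θ₀ 8 * h8
  have h10 : θ 10 = θ₀ 10 := by linarith
  have h11 : θ 11 = θ₀ 11 := by
    rw [h9, h0] at e11; linarith
  have h12 : θ 12 = θ₀ 12 := by
    rw [h9, h1] at e22; linarith
  have h13 : θ 13 = θ₀ 13 := by
    have e33' : θ 9 * (θ 2 * θ 2) + θ 13 = θ₀ 9 * (θ₀ 2 * θ₀ 2) + θ₀ 13 := e33
    rw [h9, h2] at e33'; linarith
  have h14 : θ 14 = θ₀ 14 := by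
    rw [h9, h7, h20] at g00; linarith
  have h15 : θ 15 = θ₀ 15 := by
    rw [h9, h7, h20, h3] at g11; linarith
  have h16 : θ 16 = θ₀ 16 := by
    rw [h9, h7, h20, h4] at g22; linarith
  have h17 : θ 17 = θ₀ 17 := by
    have g33' : θ 9 * (θ 8 * θ 8) + θ 21 + θ 17 = θ₀ 9 * (θ₀ 8 * θ₀ 8) + θ₀ 21 + θ₀ 17 := g33
    rw [h9, h8, h21] at g33'; linarith
  have h18 : θ 18 = θ₀ 18 := by
    have g44' : (θ 5 * (θ 9 * (θ 8 * θ 8)) + θ 5 * θ 21) * θ 5 + θ 18 = (θ₀ 5 * (θ₀ 9 * (θ₀ 8 * θ₀ 8)) + θ₀ 5 * θ₀ 21) * θ₀ 5 + θ₀ 18 := g44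
    rw [h9, h8, h21, h5] at g44'; linarith
  have h19 : θ 19 = θ₀ 19 := by
    have g55' : (θ 6 * (θ 9 * (θ 8 * θ 8)) + θ 6 * θ 21) * θ 6 + θ 19 = (θ₀ 6 * (θ₀ 9 * (θ₀ 8 * θ₀ 8)) + θ₀ 6 * θ₀ 21) * θ₀ 6 + θ₀ 19 := g55
    rw [h9, h8, h21, h6] at g55'; linarith
  funext i
  fin_cases i <;> assumption

end
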